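/- Let N = ∏_{i=1}^m p_i^{e_i} with m ≥ 2 distinct odd primes and e_i > 0. For each i let u_i generate (ℤ/p_i^{e_i})^*, of order 2^{c_i} p_i' with p_i' odd, and assume c_1 ≥ c_2 ≥ ... ≥ c_m. Let a ∈ (ℤ/N)^* correspond under the Chinese Remainder isomorphism to (u_1^{d_1}, ..., u_m^{d_m}). Let s ≥ 0 be the least integer such that a^{2^s q} ≡ 1 mod N for some odd q. If there exist i < j with d_i odd and d_j even, then s > 0, and x = a^{2^{s−1} q} satisfies x² ≡ 1 mod N and x ≢ ±1 mod N. -/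

import Mathlib

/-!
Let `g_k = u_k ^ d_k` be the `k`-th CRT component of `a`. Since `d_i` is odd, the 2-part of
`ord g_i` is `2 ^ c_i`, which forces `c_i ≤ s`; and `c_i ≥ 1` because `(ℤ/p_i^{e_i})^*` has even
order. Since `d_j` is even and `c_j ≤ c_i`, the 2-part of `ord g_j` is at most `2 ^ (c_i - 1)`, so
`g_j ^ (2 ^ (s - 1) * q) = 1`. Hence `x = a ^ (2 ^ (s - 1) * q)` is `1` in the `j`-th component,
so `x ≠ -1`, while `x ≠ 1` by the minimality of `s`.
-/

section Monoid

variable {G : Type*} [Monoid G]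

theorem pow_two_pow_mul_eq_one_of_odd {g : G} {s t q r : ℕ} (hr : Odd r)
    (hs : g ^ (2 ^ s * q) = 1) (ht : g ^ (2 ^ t * r) = 1) : g ^ (2 ^ t * q) = 1 := by
  have h2 : (g ^ (2 ^ t * q)) ^ 2 ^ s = 1 := by
    rw [← pow_mul, show 2 ^ t * q * 2 ^ s = 2 ^ s * q * 2 ^ t by ring, pow_mul, hs, one_pow]
  have hodd : (g ^ (2 ^ t * q)) ^ r = 1 := by
    rw [← pow_mul, show 2 ^ t * q * r = 2 ^ t * r * q by ring, pow_mul, ht, one_pow]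
  have hcop : Nat.Coprime (2 ^ s) r := (Nat.coprime_two_left.mpr hr).pow_left s
  simpa [hcop] using pow_gcd_eq_one.mpr ⟨h2, hodd⟩

theorem le_of_pow_odd_pow_two_pow_mul_odd_eq_one {u : G} {c r d s q : ℕ}
    (hu : orderOf u = 2 ^ c * r) (hd : Odd d) (hq : Odd q) (h : (u ^ d) ^ (2 ^ s * q) = 1) :
    c ≤ s := by
  have hdvd : 2 ^ c ∣ 2 ^ s * (d * q) := by
    refine (Dvd.intro r hu.symm).trans (orderOf_dvd_of_pow_eq_one ?_)
    rw [← h, ← pow_mul]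
    ring_nf
  have hcop : Nat.Coprime (2 ^ c) (d * q) :=
    (Nat.coprime_two_left.mpr (hd.mul hq)).pow_left c
  exact (Nat.pow_dvd_pow_iff_le_right one_lt_two).mp (hcop.dvd_of_dvd_mul_right hdvd)

/-- For `c = 0` the truncated `c - 1` is `0`; the claim still holds since `u` then has order `r`. -/
theorem pow_even_pow_two_pow_pred_mul_eq_one {u : G} {c r d : ℕ}
    (hu : orderOf u = 2 ^ c * r) (hd : Even d) : (u ^ d) ^ (2 ^ (c - 1) * r) = 1 := by
  rw [← pow_mul, ← orderOf_dvd_iff_pow_eq_one, hu]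
  obtain ⟨k, rfl⟩ := hd
  cases c with
  | zero => exact Dvd.intro_left (k + k) (by simp)
  | succ c => exact Dvd.intro k (by rw [Nat.add_sub_cancel]; ring)

end Monoid

theorem two_lt_pow_of_prime_of_odd {p e : ℕ} (hp : p.Prime) (hodd : Odd p) (he : 0 < e) :
    2 < p ^ e :=
  (hp.two_le.lt_of_ne fun h => Nat.not_odd_iff_even.mpr even_two (h ▸ hodd)).trans_le
    (Nat.le_self_pow he.ne' p)

theorem ZMod.even_orderOf_of_forall_mem_zpowers {n : ℕ} (hn : 2 < n) {u : (ZMod n)ˣ}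
    (hu : ∀ g, g ∈ Subgroup.zpowers u) : Even (orderOf u) := by
  have : NeZero n := ⟨by omega⟩
  rw [orderOf_eq_card_of_forall_mem_zpowers hu, Nat.card_eq_fintype_card,
    ZMod.card_units_eq_totient]
  exact Nat.totient_even hn

theorem ZMod.unitsMap_castHom_neg_one_ne_one {n k : ℕ} (hn : 2 < n) (h : n ∣ k) :
    Units.map (ZMod.castHom h (ZMod n)).toMonoidHom (-1) ≠ 1 := by
  have : Fact (2 < n) := ⟨hn⟩
  intro h1
  have hval := congrArg Units.val h1
  simp only [RingHom.toMonoidHom_eq_coe, Units.map_neg, map_one, Units.val_neg, Units.val_one]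
    at hval
  exact ZMod.neg_one_ne_one hval

theorem stmt_4_general (m : ℕ) (p e : Fin m → ℕ)
    (hp : ∀ i, (p i).Prime) (hpodd : ∀ i, Odd (p i))
    (he : ∀ i, 0 < e i) (N : ℕ)
    (hdvd : ∀ i, p i ^ e i ∣ N)
    (u : Π i, (ZMod (p i ^ e i))ˣ)
    (hu : ∀ i, ∀ g : (ZMod (p i ^ e i))ˣ, g ∈ Subgroup.zpowers (u i))
    (c p' : Fin m → ℕ) (hp' : ∀ i, Odd (p' i))
    (horder : ∀ i, orderOf (u i) = 2 ^ c i * p' i)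
    (hc : ∀ i j : Fin m, i ≤ j → c j ≤ c i)
    (a : (ZMod N)ˣ) (d : Fin m → ℕ)
    (hcrt : ∀ i, Units.map (ZMod.castHom (hdvd i) (ZMod (p i ^ e i))).toMonoidHom a
      = u i ^ d i)
    (s q : ℕ) (hq : Odd q) (ha : a ^ (2 ^ s * q) = 1)
    (hmin : ∀ s' q', s' < s → Odd q' → a ^ (2 ^ s' * q') ≠ 1)
    (hij : ∃ i j : Fin m, i < j ∧ Odd (d i) ∧ Even (d j)) :
    0 < s ∧ (a ^ (2 ^ (s - 1) * q)) ^ 2 = 1 ∧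
      a ^ (2 ^ (s - 1) * q) ≠ 1 ∧ a ^ (2 ^ (s - 1) * q) ≠ -1 := by
  obtain ⟨i, j, hij, hdi, hdj⟩ := hij
  have hcomp : ∀ k n, (u k ^ d k) ^ n
      = Units.map (ZMod.castHom (hdvd k) (ZMod (p k ^ e k))).toMonoidHom (a ^ n) := by
    intro k n
    rw [map_pow, hcrt]
  have hci_pos : 0 < c i := by
    have := ZMod.even_orderOf_of_forall_mem_zpowers
      (two_lt_pow_of_prime_of_odd (hp i) (hpodd i) (he i)) (hu i)
    rw [horder i] at this
    exact Nat.pos_of_ne_zero fun h0 => by simp [h0, Nat.not_even_iff_odd.mpr (hp' i)] at this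
  have hci_le : c i ≤ s :=
    le_of_pow_odd_pow_two_pow_mul_odd_eq_one (horder i) hdi hq (by rw [hcomp, ha, map_one])
  have hj : (u j ^ d j) ^ (2 ^ (s - 1) * q) = 1 := by
    refine pow_two_pow_mul_eq_one_of_odd (hp' j) (by rw [hcomp, ha, map_one]) ?_
    refine orderOf_dvd_iff_pow_eq_one.mp ((orderOf_dvd_of_pow_eq_one
      (pow_even_pow_two_pow_pred_mul_eq_one (horder j) hdj)).trans ?_)
    exact mul_dvd_mul_right (pow_dvd_pow 2 (by have := hc i j hij.le; omega)) _
  refine ⟨by omega, ?_, hmin (s - 1) q (by omega) hq, fun hx => ?_⟩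
  · rw [← pow_mul, mul_right_comm, ← pow_succ, Nat.sub_add_cancel (by omega), ha]
  · rw [hcomp, hx] at hj
    exact ZMod.unitsMap_castHom_neg_one_ne_one
      (two_lt_pow_of_prime_of_odd (hp j) (hpodd j) (he j)) (hdvd j) hj

/-- nontrivial square root of 1 mod N from mixed parities of the
CRT exponents. -/
theorem stmt_4 (m : ℕ) (hm : 2 ≤ m) (p e : Fin m → ℕ)
    (hp : ∀ i, (p i).Prime) (hpodd : ∀ i, Odd (p i)) (hinj : Function.Injective p)
    (he : ∀ i, 0 < e i) (N : ℕ) (hN : N = ∏ i, p i ^ e i)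
    (hdvd : ∀ i, p i ^ e i ∣ N)
    (u : Π i, (ZMod (p i ^ e i))ˣ)
    (hu : ∀ i, ∀ g : (ZMod (p i ^ e i))ˣ, g ∈ Subgroup.zpowers (u i))
    (c p' : Fin m → ℕ) (hp' : ∀ i, Odd (p' i))
    (horder : ∀ i, orderOf (u i) = 2 ^ c i * p' i)
    (hc : ∀ i j : Fin m, i ≤ j → c j ≤ c i)
    (a : (ZMod N)ˣ) (d : Fin m → ℕ)
    (hcrt : ∀ i, Units.map (ZMod.castHom (hdvd i) (ZMod (p i ^ e i))).toMonoidHom a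
      = u i ^ d i)
    (s q : ℕ) (hq : Odd q) (ha : a ^ (2 ^ s * q) = 1)
    (hmin : ∀ s' q', s' < s → Odd q' → a ^ (2 ^ s' * q') ≠ 1)
    (hij : ∃ i j : Fin m, i < j ∧ Odd (d i) ∧ Even (d j)) :
    0 < s ∧ (a ^ (2 ^ (s - 1) * q)) ^ 2 = 1 ∧
      a ^ (2 ^ (s - 1) * q) ≠ 1 ∧ a ^ (2 ^ (s - 1) * q) ≠ -1 :=
  stmt_4_general m p e hp hpodd he N hdvd u hu c p' hp' horder hc a d hcrt s q hq ha hmin hij
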